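/- On T = cℤ (c > 0), the diamond-α derivative of the delta-monomial h_{k+1} satisfies h_{k+1}^{◇α}(t,t₀) = h_k(t,t₀) + (1−α)·Σ_{j=1}^{k} (−1)^j c^j h_{k−j}(t,t₀), for every α ∈ [0,1]. -/

import Mathlib

/-!
Write `x⁻ᵏ` for the falling factorial, so `h_k(t, t₀) = c ^ k (x⁻ᵏ / k!)` with `x = (t - t₀) / c`.
Since `(x + 1)⁻⁽ᵏ⁺¹⁾ - x⁻⁽ᵏ⁺¹⁾ = (k + 1) x⁻ᵏ`, both difference quotients of `h_{k+1}` are values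
of `h_k`: `h_{k+1}^Δ(t) = h_k(t)` and `h_{k+1}^∇(t) = h_k(t - c)`. Iterating
`h_k(t - c) = h_k(t) - c h_{k-1}(t - c)` gives `h_k(t - c) = ∑_{j ≤ k} (-c)^j h_{k-j}(t)`, and
the diamond-α derivative is `α h_k(t) + (1 - α) h_k(t - c)`.
-/

open Finset

/-- Delta monomial on cℤ in closed form. -/
noncomputable def hMono (c : ℝ) (k : ℕ) (t t₀ : ℝ) : ℝ :=
  c ^ k * (descPochhammer ℝ k).eval ((t - t₀) / c) / (Nat.factorial k : ℝ)

theorem descPochhammer_eval_add_one_sub_eval {R : Type*} [CommRing R] (k : ℕ) (x : R) :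
    (descPochhammer R (k + 1)).eval (x + 1) - (descPochhammer R (k + 1)).eval x
      = (k + 1) * (descPochhammer R k).eval x := by
  rw [descPochhammer_succ_eval k x, descPochhammer_succ_left]
  simp only [Polynomial.eval_mul, Polynomial.eval_X, Polynomial.eval_comp, Polynomial.eval_sub,
    Polynomial.eval_one, add_sub_cancel_right]
  ring

section hMono

variable {c : ℝ}

theorem hMono_add_sub_hMono (hc : c ≠ 0) (k : ℕ) (t t₀ : ℝ) :
    hMono c (k + 1) (t + c) t₀ - hMono c (k + 1) t t₀ = c * hMono c k t t₀ := by
  have hshift : (t + c - t₀) / c = (t - t₀) / c + 1 := by field_simp; ring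
  unfold hMono
  rw [hshift, div_sub_div_same, ← mul_sub, descPochhammer_eval_add_one_sub_eval,
    Nat.factorial_succ]
  push_cast
  field_simp
  ring

theorem hMono_sub_hMono_sub (hc : c ≠ 0) (k : ℕ) (t t₀ : ℝ) :
    hMono c (k + 1) t t₀ - hMono c (k + 1) (t - c) t₀ = c * hMono c k (t - c) t₀ := by
  simpa using hMono_add_sub_hMono hc k (t - c) t₀

theorem hMono_sub_eq_sum (hc : c ≠ 0) (k : ℕ) (t t₀ : ℝ) :
    hMono c k (t - c) t₀ = ∑ j ∈ range (k + 1), (-c) ^ j * hMono c (k - j) t t₀ := by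
  induction k with
  | zero => simp [hMono]
  | succ k ih =>
    calc hMono c (k + 1) (t - c) t₀
        = hMono c (k + 1) t t₀ - c * hMono c k (t - c) t₀ := by
          linarith [hMono_sub_hMono_sub hc k t t₀]
      _ = hMono c (k + 1) t t₀ + ∑ j ∈ range (k + 1), (-c) ^ (j + 1) * hMono c (k - j) t t₀ := by
          rw [ih, sub_eq_add_neg, neg_mul_eq_neg_mul, mul_sum]
          simp only [pow_succ', mul_assoc]
      _ = ∑ j ∈ range (k + 2), (-c) ^ j * hMono c (k + 1 - j) t t₀ := by
          rw [sum_range_succ' _ (k + 1)]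
          simp [add_comm]

end hMono

theorem stmt8_general (c : ℝ) (hc : 0 < c) (α : ℝ)
    (k : ℕ) (m n : ℤ) :
    α * ((hMono c (k + 1) (c * m + c) (c * n) - hMono c (k + 1) (c * m) (c * n)) / c)
      + (1 - α) *
        ((hMono c (k + 1) (c * m) (c * n) - hMono c (k + 1) (c * m - c) (c * n)) / c)
      = hMono c k (c * m) (c * n)
        + (1 - α) * ∑ j ∈ Finset.Icc 1 k,
            (-1 : ℝ) ^ j * c ^ j * hMono c (k - j) (c * m) (c * n) := by
  have hc₀ := hc.ne'
  rw [hMono_add_sub_hMono hc₀, hMono_sub_hMono_sub hc₀, mul_div_cancel_left₀ _ hc₀,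
    mul_div_cancel_left₀ _ hc₀, hMono_sub_eq_sum hc₀, range_eq_Ico,
    sum_eq_sum_Ico_succ_bot k.succ_pos, zero_add, Nat.succ_eq_add_one, Ico_add_one_right_eq_Icc]
  simp only [neg_pow c, pow_zero, one_mul, Nat.sub_zero]
  ring

/-- On T = cℤ, the diamond-α derivative f^{◇α}(t) = α(f(t+c)−f(t))/c + (1−α)(f(t)−f(t−c))/c
of the delta monomial satisfies
h_{k+1}^{◇α}(t,t₀) = h_k(t,t₀) + (1−α)·Σ_{j=1}^{k} (−1)^j c^j h_{k−j}(t,t₀).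
Points t = c·m, t₀ = c·n. -/
theorem stmt8 (c : ℝ) (hc : 0 < c) (α : ℝ) (hα : α ∈ Set.Icc (0 : ℝ) 1)
    (k : ℕ) (m n : ℤ) :
    α * ((hMono c (k + 1) (c * m + c) (c * n) - hMono c (k + 1) (c * m) (c * n)) / c)
      + (1 - α) *
        ((hMono c (k + 1) (c * m) (c * n) - hMono c (k + 1) (c * m - c) (c * n)) / c)
      = hMono c k (c * m) (c * n)
        + (1 - α) * ∑ j ∈ Finset.Icc 1 k,
            (-1 : ℝ) ^ j * c ^ j * hMono c (k - j) (c * m) (c * n) :=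
  stmt8_general c hc α k m n
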